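/- For D̃4 with Coxeter maps c• and c∘ as above, every positive root v with L(v) = v_1+v_2+v_3+v_4−2v_0 ≠ 0 eventually leaves the positive cone under iteration of the appropriate Coxeter map: there exists a finite alternating composition of c• and c∘ carrying v to a coordinate vector e_g for some vertex g; equivalently, for the Coxeter transformation c = c∘c•, there exists t ∈ ℤ with c^t(v) not ≥ 0 componentwise (v is singular). -/

import Mathlib

/-- Tits form of D̃₄, coordinates (v₁,v₂,v₃,v₄,v₀): leaves 0,1,2,3, center 4. -/
def qD4 (x : Fin 5 → ℤ) : ℤ :=
  (∑ i, x i ^ 2) - x 4 * (x 0 + x 1 + x 2 + x 3)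

/-- c• : vᵢ ↦ −vᵢ + v₀ simultaneously at the four leaves. -/
def cBulletD4 (x : Fin 5 → ℤ) : Fin 5 → ℤ :=
  ![x 4 - x 0, x 4 - x 1, x 4 - x 2, x 4 - x 3, x 4]

/-- c∘ : v₀ ↦ −v₀ + v₁+v₂+v₃+v₄ at the center. -/
def cCircD4 (x : Fin 5 → ℤ) : Fin 5 → ℤ :=
  ![x 0, x 1, x 2, x 3, x 0 + x 1 + x 2 + x 3 - x 4]

/-- Finite alternating compositions of c• (true) and c∘ (false). -/
def applyWordD4 : List Bool → (Fin 5 → ℤ) → (Fin 5 → ℤ)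
  | [], x => x
  | b :: w, x => (if b then cBulletD4 else cCircD4) (applyWordD4 w x)

/-- Coxeter transformation c = c∘ c• and its inverse c⁻¹ = c• c∘. -/
def cD4 : (Fin 5 → ℤ) → (Fin 5 → ℤ) := cCircD4 ∘ cBulletD4
def cInvD4 : (Fin 5 → ℤ) → (Fin 5 → ℤ) := cBulletD4 ∘ cCircD4

/-! Both c• and c∘ preserve the Tits form and negate L, and the coordinate sum changes by
−2L under c• and by +L under c∘. Hence c and c⁻¹ preserve L and shift the coordinate sum by
∓3L, so for L ≠ 0 one of the two orbits leaves the positive cone.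

For the words, descend on the coordinate sum using the identity 4q(v) = Σᵢ (2vᵢ − v₀)² over
the leaves: if L(v) > 0, either every leaf coordinate is at most v₀, so c• v is again a
positive root with smaller sum, or some (2vᵢ − v₀)² ≤ 4 with vᵢ > v₀ forces v₀ = 0 and then
v is a leaf coordinate vector. If L(v) < 0 the same works with c∘, the exceptional root being
the centre coordinate vector. -/

def LD4 (x : Fin 5 → ℤ) : ℤ := x 0 + x 1 + x 2 + x 3 - 2 * x 4

def reflD4 (b : Bool) : (Fin 5 → ℤ) → (Fin 5 → ℤ) := if b then cBulletD4 else cCircD4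

lemma applyWordD4_cons (b : Bool) (w : List Bool) (x : Fin 5 → ℤ) :
    applyWordD4 (b :: w) x = reflD4 b (applyWordD4 w x) := rfl

lemma applyWordD4_append_singleton (w : List Bool) (b : Bool) (x : Fin 5 → ℤ) :
    applyWordD4 (w ++ [b]) x = applyWordD4 w (reflD4 b x) := by
  induction w with
  | nil => rfl
  | cons a w ih => simp only [List.cons_append, applyWordD4_cons, ih]

lemma qD4_reflD4 (b : Bool) (x : Fin 5 → ℤ) : qD4 (reflD4 b x) = qD4 x := by
  cases b <;>
    simp only [reflD4, Bool.false_eq_true, ↓reduceIte, qD4, cBulletD4, cCircD4, Fin.sum_univ_five,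
      Matrix.cons_val_zero, Matrix.cons_val_one, Matrix.cons_val] <;> ring

lemma LD4_cBulletD4 (x : Fin 5 → ℤ) : LD4 (cBulletD4 x) = -LD4 x := by
  simp only [LD4, cBulletD4, Matrix.cons_val_zero, Matrix.cons_val_one, Matrix.cons_val]; ring

lemma LD4_cCircD4 (x : Fin 5 → ℤ) : LD4 (cCircD4 x) = -LD4 x := by
  simp only [LD4, cCircD4, Matrix.cons_val_zero, Matrix.cons_val_one, Matrix.cons_val]; ring

lemma LD4_reflD4 (b : Bool) (x : Fin 5 → ℤ) : LD4 (reflD4 b x) = -LD4 x := by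
  cases b
  exacts [LD4_cCircD4 x, LD4_cBulletD4 x]

lemma sum_cBulletD4 (x : Fin 5 → ℤ) : ∑ i, cBulletD4 x i = ∑ i, x i - 2 * LD4 x := by
  simp only [cBulletD4, LD4, Fin.sum_univ_five, Matrix.cons_val_zero, Matrix.cons_val_one, Matrix.cons_val]; ring

lemma sum_cCircD4 (x : Fin 5 → ℤ) : ∑ i, cCircD4 x i = ∑ i, x i + LD4 x := by
  simp only [cCircD4, LD4, Fin.sum_univ_five, Matrix.cons_val_zero, Matrix.cons_val_one, Matrix.cons_val]; ring

lemma LD4_cD4 (x : Fin 5 → ℤ) : LD4 (cD4 x) = LD4 x := by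
  rw [cD4, Function.comp_apply, LD4_cCircD4, LD4_cBulletD4, neg_neg]

lemma LD4_cInvD4 (x : Fin 5 → ℤ) : LD4 (cInvD4 x) = LD4 x := by
  rw [cInvD4, Function.comp_apply, LD4_cBulletD4, LD4_cCircD4, neg_neg]

lemma sum_cD4 (x : Fin 5 → ℤ) : ∑ i, cD4 x i = ∑ i, x i - 3 * LD4 x := by
  rw [cD4, Function.comp_apply, sum_cCircD4, sum_cBulletD4, LD4_cBulletD4]
  ring

lemma sum_cInvD4 (x : Fin 5 → ℤ) : ∑ i, cInvD4 x i = ∑ i, x i + 3 * LD4 x := by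
  rw [cInvD4, Function.comp_apply, sum_cBulletD4, sum_cCircD4, LD4_cCircD4]
  ring

lemma four_mul_qD4 (x : Fin 5 → ℤ) :
    4 * qD4 x = (2 * x 0 - x 4) ^ 2 + (2 * x 1 - x 4) ^ 2 + (2 * x 2 - x 4) ^ 2
      + (2 * x 3 - x 4) ^ 2 := by
  simp only [qD4, Fin.sum_univ_five]; ring

lemma eq_single_of_sum_sq_le_one {ι : Type*} [Fintype ι] [DecidableEq ι] {x : ι → ℤ}
    (hx : ∀ i, 0 ≤ x i) (hsq : ∑ i, x i ^ 2 ≤ 1) {g : ι} (hg : x g ≠ 0) :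
    x = Pi.single g 1 := by
  have hg1 : 1 ≤ x g ^ 2 := by nlinarith [(hx g).lt_of_ne' hg]
  funext j
  by_cases hj : j = g
  · subst hj
    have : x j ^ 2 ≤ 1 :=
      (Finset.single_le_sum (fun i _ => sq_nonneg (x i)) (Finset.mem_univ j)).trans hsq
    simp only [Pi.single_eq_same]
    nlinarith [hx j]
  · have : ∑ i ∈ {g, j}, x i ^ 2 ≤ ∑ i, x i ^ 2 :=
      Finset.sum_le_univ_sum_of_nonneg fun i => sq_nonneg (x i)
    rw [Finset.sum_pair (Ne.symm hj)] at this
    rw [Pi.single_eq_of_ne hj]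
    nlinarith [hx j]

lemma cCircD4_nonneg_or_eq_single {x : Fin 5 → ℤ} (hx : ∀ i, 0 ≤ x i) (hq : qD4 x ≤ 1) :
    (∀ i, 0 ≤ cCircD4 x i) ∨ x = Pi.single 4 1 := by
  by_cases hσ : x 4 ≤ x 0 + x 1 + x 2 + x 3
  · left
    intro i
    fin_cases i <;> simp [cCircD4, hx, hσ]
  · right
    have := hx 0; have := hx 1; have := hx 2; have := hx 3
    have hsq : ∑ i, x i ^ 2 ≤ 1 := by
      simp only [qD4, Fin.sum_univ_five] at hq ⊢
      nlinarith
    exact eq_single_of_sum_sq_le_one hx hsq (by omega)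

lemma cBulletD4_nonneg_or_eq_single {x : Fin 5 → ℤ} (hx : ∀ i, 0 ≤ x i) (hq : qD4 x ≤ 1) :
    (∀ i, 0 ≤ cBulletD4 x i) ∨ ∃ g, x = Pi.single g 1 := by
  refine or_iff_not_imp_left.2 fun h => ?_
  push Not at h
  obtain ⟨g, hg⟩ := h
  have hgq : x 4 < x g ∧ (2 * x g - x 4) ^ 2 ≤ 4 := by
    have := four_mul_qD4 x
    have := hx 4
    have := sq_nonneg (2 * x 0 - x 4); have := sq_nonneg (2 * x 1 - x 4)
    have := sq_nonneg (2 * x 2 - x 4); have := sq_nonneg (2 * x 3 - x 4)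
    fin_cases g <;> simp only [cBulletD4, Fin.reduceFinMk, Fin.isValue, Fin.zero_eta, Fin.mk_one,
      Matrix.cons_val_zero, Matrix.cons_val_one, Matrix.cons_val, sub_neg] at hg ⊢ <;>
      first | linarith | exact ⟨hg, by linarith⟩
  have hx4 : x 4 = 0 := by nlinarith [hx 4]
  have hsq : ∑ i, x i ^ 2 ≤ 1 := by
    simpa [qD4, hx4] using hq
  exact ⟨g, eq_single_of_sum_sq_le_one hx hsq (by omega)⟩

lemma exists_reflD4_nonneg_sum_lt {x : Fin 5 → ℤ} (hx : ∀ i, 0 ≤ x i) (hq : qD4 x ≤ 1)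
    (hL : LD4 x ≠ 0) :
    (∃ g, x = Pi.single g 1) ∨ ∃ b, (∀ i, 0 ≤ reflD4 b x i) ∧ ∑ i, reflD4 b x i < ∑ i, x i := by
  rcases hL.lt_or_gt with hL | hL
  · rcases cCircD4_nonneg_or_eq_single hx hq with h | h
    · exact Or.inr ⟨false, h, (sum_cCircD4 x).trans_lt (by linarith)⟩
    · exact Or.inl ⟨4, h⟩
  · rcases cBulletD4_nonneg_or_eq_single hx hq with h | h
    · exact Or.inr ⟨true, h, (sum_cBulletD4 x).trans_lt (by linarith)⟩
    · exact Or.inl h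

theorem exists_applyWordD4_eq_single {x : Fin 5 → ℤ} (hx : ∀ i, 0 ≤ x i) (hq : qD4 x ≤ 1)
    (hL : LD4 x ≠ 0) : ∃ w g, applyWordD4 w x = Pi.single g 1 := by
  induction h : (∑ i, x i).toNat using Nat.strong_induction_on generalizing x with
  | _ n ih =>
  rcases exists_reflD4_nonneg_sum_lt hx hq hL with ⟨g, rfl⟩ | ⟨b, hy, hlt⟩
  · exact ⟨[], g, rfl⟩
  · have hS : 0 ≤ ∑ i, reflD4 b x i := Finset.sum_nonneg fun i _ => hy i
    obtain ⟨w, g, hw⟩ := ih _ (by omega) hy (by rwa [qD4_reflD4])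
      (by rwa [LD4_reflD4, neg_ne_zero]) rfl
    exact ⟨w ++ [b], g, by rw [applyWordD4_append_singleton, hw]⟩

lemma apply_iterate_eq_sub_mul {α : Type*} {f : α → α} {φ ψ : α → ℤ}
    (hψ : ∀ y, ψ (f y) = ψ y) (hφ : ∀ y, φ (f y) = φ y - ψ y) (x : α) (t : ℕ) :
    φ (f^[t] x) = φ x - t * ψ x := by
  induction t with
  | zero => simp
  | succ t ih =>
    have hψt : ψ (f^[t] x) = ψ x := by
      simpa using (Function.Semiconj.iterate_right (f := ψ) (ga := f) (gb := id) hψ t) x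
    rw [Function.iterate_succ_apply', hφ, ih, hψt]
    push_cast
    ring

lemma exists_iterate_not_nonneg {ι : Type*} [Fintype ι] {f : (ι → ℤ) → ι → ℤ}
    {ψ : (ι → ℤ) → ℤ} (hψ : ∀ y, ψ (f y) = ψ y) (hf : ∀ y, ∑ i, f y i = ∑ i, y i - ψ y)
    {x : ι → ℤ} (hx : 0 < ψ x) : ∃ t : ℕ, ¬ ∀ i, 0 ≤ (f^[t] x) i := by
  refine ⟨(∑ i, x i).toNat + 1, fun h => ?_⟩
  have h0 := Finset.sum_nonneg (s := Finset.univ) fun i _ => h i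
  rw [apply_iterate_eq_sub_mul (φ := fun y => ∑ i, y i) hψ hf] at h0
  push_cast at h0
  nlinarith [Int.self_le_toNat (∑ i, x i)]

theorem stmt19_general (v : Fin 5 → ℤ) (hpos : ∀ i, 0 ≤ v i)
    (hroot : qD4 v ≤ 1) (hL : v 0 + v 1 + v 2 + v 3 - 2 * v 4 ≠ 0) :
    (∃ (w : List Bool) (g : Fin 5), applyWordD4 w v = Pi.single g 1) ∧
    (∃ t : ℕ, (¬ ∀ i, 0 ≤ (cD4^[t] v) i) ∨ (¬ ∀ i, 0 ≤ (cInvD4^[t] v) i)) := by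
  refine ⟨exists_applyWordD4_eq_single hpos hroot hL, ?_⟩
  rcases (show LD4 v ≠ 0 from hL).lt_or_gt with hL | hL
  · obtain ⟨t, ht⟩ := exists_iterate_not_nonneg (ψ := fun y => -3 * LD4 y)
      (fun y => by rw [LD4_cInvD4]) (fun y => by rw [sum_cInvD4]; ring) (by linarith)
    exact ⟨t, Or.inr ht⟩
  · obtain ⟨t, ht⟩ := exists_iterate_not_nonneg (ψ := fun y => 3 * LD4 y)
      (fun y => by rw [LD4_cD4]) sum_cD4 (by linarith)
    exact ⟨t, Or.inl ht⟩

/-- Every positive root v of D̃₄ with L(v) = v₁+v₂+v₃+v₄−2v₀ ≠ 0 is carried to a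
coordinate vector by some finite composition of c• and c∘; equivalently, for some
integer t the vector cᵗ(v) fails to be componentwise nonnegative (v is singular). -/
theorem stmt19 (v : Fin 5 → ℤ) (hpos : ∀ i, 0 ≤ v i) (hne : v ≠ 0)
    (hroot : qD4 v ≤ 1) (hL : v 0 + v 1 + v 2 + v 3 - 2 * v 4 ≠ 0) :
    (∃ (w : List Bool) (g : Fin 5), applyWordD4 w v = Pi.single g 1) ∧
    (∃ t : ℕ, (¬ ∀ i, 0 ≤ (cD4^[t] v) i) ∨ (¬ ∀ i, 0 ≤ (cInvD4^[t] v) i)) :=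
  stmt19_general v hpos hroot hL
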